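/- Contraction of an expanded flow yields a valid flow: if f̃ is a hyperflow on the expanded hypergraph H̃, then the function f on the extended hypergraph H̄ defined by f(e) = f̃(ẽ) for each original edge e (where ẽ is the reconnected copy of e in H̃) satisfies the mass conservation constraint at every vertex of H̄. -/

import Mathlib

/-- A (real-valued) hyperflow on a directed multi-hypergraph: a nonnegative function
on edges satisfying mass conservation at every vertex. -/
def IsHyperflow {V E : Type} [Fintype E] (tail head : E → V → ℕ) (f : E → ℝ) : Prop :=
  (∀ e, 0 ≤ f e) ∧
  ∀ v, (∑ e, (tail e v : ℝ) * f e) = ∑ e, (head e v : ℝ) * f e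

/-- Vertices of the expanded hypergraph: `inl (v,e)` is the in-vertex `u⁻_{ve}` for an
in-edge `e` of `v`, `inr (v,e)` is the out-vertex `u⁺_{ve}` for an out-edge `e` of `v`. -/
abbrev ExpVert (V E : Type) := (V × E) ⊕ (V × E)

/-- Edges of the expanded hypergraph: `inl (v,e,e')` is the transit edge of `v` from
in-edge `e` to out-edge `e'`, `inr e` is the reconnected copy `ẽ` of an original edge. -/
abbrev ExpEdge (V E : Type) := (V × E × E) ⊕ E

/-- Tail multiplicities of the expanded hypergraph. -/
def expTail {V E : Type} [DecidableEq V] [DecidableEq E]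
    (tail head : E → V → ℕ) : ExpEdge V E → ExpVert V E → ℕ
  | Sum.inl (v, e, e'), Sum.inl (w, e₀) =>
      if w = v ∧ e₀ = e ∧ 0 < head e v ∧ 0 < tail e' v then 1 else 0
  | Sum.inr e, Sum.inr (w, e₀) => if e₀ = e then tail e w else 0
  | _, _ => 0

/-- Head multiplicities of the expanded hypergraph. -/
def expHead {V E : Type} [DecidableEq V] [DecidableEq E]
    (tail head : E → V → ℕ) : ExpEdge V E → ExpVert V E → ℕ
  | Sum.inl (v, e, e'), Sum.inr (w, e₀) =>
      if w = v ∧ e₀ = e' ∧ 0 < head e v ∧ 0 < tail e' v then 1 else 0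
  | Sum.inr e, Sum.inl (w, e₀) => if e₀ = e then head e w else 0
  | _, _ => 0

/-! Conservation at the out-vertex `u⁺_{ve}` says that `tail e v • f(ẽ)` is the flow entering it
through the transit edges of `v` that end at `e`; conservation at the in-vertex `u⁻_{ve}` says
that `head e v • f(ẽ)` is the flow leaving it through the transit edges of `v` that start at `e`.
Summed over `e`, outflow and inflow of `v` under the contracted flow are therefore both the total
flow through the transit edges of `v`. -/

section Expansion

variable {V E : Type} [Fintype V] [Fintype E] [DecidableEq V] [DecidableEq E]
  (tail head : E → V → ℕ) (g : ExpEdge V E → ℝ) (v : V) (e₀ : E)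

lemma sum_expTail_inl_mul :
    ∑ x, (expTail tail head x (Sum.inl (v, e₀)) : ℝ) * g x =
      ∑ e', if 0 < head e₀ v ∧ 0 < tail e' v then g (Sum.inl (v, e₀, e')) else 0 := by
  simp [Fintype.sum_sum_type, Fintype.sum_prod_type, expTail, ite_and]

lemma sum_expHead_inl_mul :
    ∑ x, (expHead tail head x (Sum.inl (v, e₀)) : ℝ) * g x = head e₀ v * g (Sum.inr e₀) := by
  simp [Fintype.sum_sum_type, expHead]

lemma sum_expTail_inr_mul :
    ∑ x, (expTail tail head x (Sum.inr (v, e₀)) : ℝ) * g x = tail e₀ v * g (Sum.inr e₀) := by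
  simp [Fintype.sum_sum_type, expTail]

lemma sum_expHead_inr_mul :
    ∑ x, (expHead tail head x (Sum.inr (v, e₀)) : ℝ) * g x =
      ∑ e, if 0 < head e v ∧ 0 < tail e₀ v then g (Sum.inl (v, e, e₀)) else 0 := by
  simp [Fintype.sum_sum_type, Fintype.sum_prod_type, expHead, ite_and]

end Expansion

/-- Contraction of an expanded flow yields a valid flow: if `f̃` is a hyperflow on the
expanded hypergraph, then assigning to each original edge `e` the value `f̃(ẽ)` of its
reconnected copy gives a hyperflow on the original (extended) hypergraph. -/
theorem stmt_18 {V E : Type} [Fintype V] [Fintype E] [DecidableEq V] [DecidableEq E]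
    (tail head : E → V → ℕ) (ftilde : ExpEdge V E → ℝ)
    (hft : IsHyperflow (expTail tail head) (expHead tail head) ftilde) :
    IsHyperflow tail head (fun e => ftilde (Sum.inr e)) := by
  obtain ⟨hnonneg, hcons⟩ := hft
  refine ⟨fun e => hnonneg (Sum.inr e), fun v => ?_⟩
  have out_vertex (e₀ : E) := hcons (Sum.inr (v, e₀))
  have in_vertex (e₀ : E) := hcons (Sum.inl (v, e₀))
  simp only [sum_expTail_inr_mul, sum_expHead_inr_mul] at out_vertex
  simp only [sum_expTail_inl_mul, sum_expHead_inl_mul] at in_vertex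
  calc ∑ e, (tail e v : ℝ) * ftilde (Sum.inr e)
      = ∑ e', ∑ e, if 0 < head e v ∧ 0 < tail e' v then ftilde (Sum.inl (v, e, e')) else 0 :=
        Fintype.sum_congr _ _ out_vertex
    _ = ∑ e, ∑ e', if 0 < head e v ∧ 0 < tail e' v then ftilde (Sum.inl (v, e, e')) else 0 :=
        Finset.sum_comm
    _ = ∑ e, (head e v : ℝ) * ftilde (Sum.inr e) :=
        Fintype.sum_congr _ _ in_vertex
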